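/- (Gradient of the smoothed coherence objective) Let ρ > 0, define g_ρ(G) = sup { ⟨G, V⟩ − (ρ/2)‖V‖_F² : ‖V‖₁ ≤ 1 } on n×n matrices and f_ρ(M) = g_ρ(MᵀM − I) for M ∈ ℝ^{m×n}. Then f_ρ is differentiable at every M with gradient ∇f_ρ(M) = M(V* + V*ᵀ), where V* is the unique maximizer of ⟨MᵀM − I, V⟩ − (ρ/2)‖V‖_F² over {V : ‖V‖₁ ≤ 1}. -/

import Mathlib

open Matrix

attribute [local instance] Matrix.normedAddCommGroup Matrix.normedSpace

/-- The entrywise ℓ₁-norm `‖V‖₁ = Σ_{i,j} |v_{ij}|`. -/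
noncomputable def l1Norm {n : ℕ} (V : Matrix (Fin n) (Fin n) ℝ) : ℝ :=
  ∑ i, ∑ j, |V i j|

/-- The Frobenius inner product `⟨A, B⟩ = Σ_{i,j} a_{ij} b_{ij}` of m×n matrices. -/
noncomputable def finner {m n : ℕ} (A B : Matrix (Fin m) (Fin n) ℝ) : ℝ :=
  ∑ i, ∑ j, A i j * B i j

/-- The squared Frobenius norm `‖V‖_F²` of an m×n matrix. -/
noncomputable def frobSq {m n : ℕ} (V : Matrix (Fin m) (Fin n) ℝ) : ℝ :=
  ∑ i, ∑ j, V i j ^ 2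

/-- The smoothed infinity norm
`g_ρ(G) = sup { ⟨G, V⟩ − (ρ/2)‖V‖_F² : ‖V‖₁ ≤ 1 }`. -/
noncomputable def gRho {n : ℕ} (ρ : ℝ) (G : Matrix (Fin n) (Fin n) ℝ) : ℝ :=
  sSup {x : ℝ | ∃ V : Matrix (Fin n) (Fin n) ℝ, l1Norm V ≤ 1 ∧
    x = finner G V - ρ / 2 * frobSq V}

/-!
`g_ρ(G)` is the maximum of `φ_G(V) = ⟨G, V⟩ - (ρ/2)‖V‖_F²` over the compact convex ℓ₁-ball.
Expanding `φ_G` along a segment shows that it is `ρ`-strongly concave on the ball: a maximiser `V`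
satisfies `φ_G(W) + (ρ/2)‖W - V‖_F² ≤ φ_G(V)`, so it is unique. Applying this margin to the
maximisers `V, V'` at `G` and `G + D` gives `ρ‖V' - V‖_F² ≤ ⟨D, V' - V⟩`, hence by AM-GM
`0 ≤ g_ρ(G + D) - g_ρ(G) - ⟨V, D⟩ ≤ ‖D‖_F² / ρ`: `g_ρ` is differentiable with gradient `V`.
The chain rule through `X ↦ XᵀX - I`, with derivative `H ↦ HᵀM + MᵀH`, and
`⟨V, HᵀM + MᵀH⟩ = ⟨M(V + Vᵀ), H⟩` finish the proof.
-/

variable {m n : ℕ}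

lemma finner_comm (A B : Matrix (Fin m) (Fin n) ℝ) : finner A B = finner B A := by
  simp only [finner, mul_comm]

lemma finner_add_right (A B C : Matrix (Fin m) (Fin n) ℝ) :
    finner A (B + C) = finner A B + finner A C := by
  simp only [finner, Matrix.add_apply, mul_add, Finset.sum_add_distrib]

lemma finner_smul_right (t : ℝ) (A B : Matrix (Fin m) (Fin n) ℝ) :
    finner A (t • B) = t * finner A B := by
  simp only [finner, Matrix.smul_apply, smul_eq_mul, Finset.mul_sum, mul_left_comm]

lemma finner_sub_right (A B C : Matrix (Fin m) (Fin n) ℝ) :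
    finner A (B - C) = finner A B - finner A C := by
  simp only [finner, Matrix.sub_apply, mul_sub, Finset.sum_sub_distrib]

lemma finner_sub_left (A B C : Matrix (Fin m) (Fin n) ℝ) :
    finner (A - B) C = finner A C - finner B C := by
  rw [finner_comm, finner_sub_right, finner_comm C, finner_comm C]

lemma finner_eq_trace (A B : Matrix (Fin m) (Fin n) ℝ) : finner A B = (Aᵀ * B).trace := by
  simp only [finner, trace, diag, mul_apply, transpose_apply]
  exact Finset.sum_comm

lemma frobSq_add (A B : Matrix (Fin m) (Fin n) ℝ) :
    frobSq (A + B) = frobSq A + 2 * finner A B + frobSq B := by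
  simp only [frobSq, finner, Matrix.add_apply, add_sq, Finset.sum_add_distrib, Finset.mul_sum,
    mul_assoc]

lemma frobSq_smul (t : ℝ) (A : Matrix (Fin m) (Fin n) ℝ) : frobSq (t • A) = t ^ 2 * frobSq A := by
  simp only [frobSq, Matrix.smul_apply, smul_eq_mul, mul_pow, Finset.mul_sum]

lemma frobSq_neg (A : Matrix (Fin m) (Fin n) ℝ) : frobSq (-A) = frobSq A := by
  simp only [frobSq, Matrix.neg_apply, neg_sq]

lemma frobSq_nonneg (A : Matrix (Fin m) (Fin n) ℝ) : 0 ≤ frobSq A := by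
  unfold frobSq; positivity

lemma frobSq_eq_zero_iff {A : Matrix (Fin m) (Fin n) ℝ} : frobSq A = 0 ↔ A = 0 := by
  simp [frobSq, Finset.sum_eq_zero_iff_of_nonneg, Finset.sum_nonneg, sq_nonneg, ← Matrix.ext_iff]

lemma two_mul_finner_le (A B : Matrix (Fin m) (Fin n) ℝ) :
    2 * finner A B ≤ frobSq A + frobSq B := by
  simp only [frobSq, finner, Finset.mul_sum, ← Finset.sum_add_distrib]
  refine Finset.sum_le_sum fun i _ => Finset.sum_le_sum fun j _ => ?_
  rw [← mul_assoc]
  exact two_mul_le_add_sq _ _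

lemma frobSq_le_mul_norm_sq (A : Matrix (Fin m) (Fin n) ℝ) : frobSq A ≤ m * n * ‖A‖ ^ 2 := by
  calc frobSq A ≤ ∑ _i : Fin m, ∑ _j : Fin n, ‖A‖ ^ 2 := by
        refine Finset.sum_le_sum fun i _ => Finset.sum_le_sum fun j _ => ?_
        rw [← sq_abs, ← Real.norm_eq_abs]
        exact pow_le_pow_left₀ (norm_nonneg _) (norm_entry_le_entrywise_sup_norm A) 2
    _ = m * n * ‖A‖ ^ 2 := by simp [mul_assoc]

def l1Ball (n : ℕ) : Set (Matrix (Fin n) (Fin n) ℝ) := {V | l1Norm V ≤ 1}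

lemma l1Norm_add_le (A B : Matrix (Fin n) (Fin n) ℝ) : l1Norm (A + B) ≤ l1Norm A + l1Norm B := by
  simp only [l1Norm, Matrix.add_apply, ← Finset.sum_add_distrib]
  exact Finset.sum_le_sum fun i _ => Finset.sum_le_sum fun j _ => abs_add_le _ _

lemma l1Norm_smul (t : ℝ) (A : Matrix (Fin n) (Fin n) ℝ) : l1Norm (t • A) = |t| * l1Norm A := by
  simp only [l1Norm, Matrix.smul_apply, smul_eq_mul, abs_mul, Finset.mul_sum]

lemma abs_le_l1Norm (A : Matrix (Fin n) (Fin n) ℝ) (i j : Fin n) : |A i j| ≤ l1Norm A :=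
  calc |A i j| ≤ ∑ j', |A i j'| :=
        Finset.single_le_sum (f := fun j' => |A i j'|) (fun _ _ => abs_nonneg _)
          (Finset.mem_univ j)
    _ ≤ l1Norm A :=
        Finset.single_le_sum (f := fun i' => ∑ j', |A i' j'|)
          (fun _ _ => Finset.sum_nonneg fun _ _ => abs_nonneg _) (Finset.mem_univ i)

lemma convex_l1Ball : Convex ℝ (l1Ball n) := by
  intro V hV W hW a b ha hb hab
  calc l1Norm (a • V + b • W) ≤ |a| * l1Norm V + |b| * l1Norm W := by
        rw [← l1Norm_smul, ← l1Norm_smul]; exact l1Norm_add_le _ _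
    _ ≤ a * 1 + b * 1 := by
        rw [abs_of_nonneg ha, abs_of_nonneg hb]; gcongr
        exacts [hV, hW]
    _ = 1 := by rw [mul_one, mul_one, hab]

lemma isCompact_l1Ball : IsCompact (l1Ball n) := by
  have hclosed : IsClosed (l1Ball n) := isClosed_le (by unfold l1Norm; fun_prop) continuous_const
  refine (isCompact_closedBall (0 : Matrix (Fin n) (Fin n) ℝ) 1).of_isClosed_subset hclosed ?_
  intro V hV
  rw [mem_closedBall_zero_iff, Matrix.norm_le_iff zero_le_one]
  exact fun i j => (Real.norm_eq_abs _).trans_le ((abs_le_l1Norm V i j).trans hV)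

section SmoothedObjective

variable {ρ : ℝ} {G V W : Matrix (Fin n) (Fin n) ℝ}

noncomputable def smoothObj (ρ : ℝ) (G V : Matrix (Fin n) (Fin n) ℝ) : ℝ :=
  finner G V - ρ / 2 * frobSq V

lemma exists_isMaxOn_smoothObj (ρ : ℝ) (G : Matrix (Fin n) (Fin n) ℝ) :
    ∃ V ∈ l1Ball n, IsMaxOn (smoothObj ρ G) (l1Ball n) V :=
  isCompact_l1Ball.exists_isMaxOn ⟨0, by simp [l1Ball, l1Norm]⟩
    (by unfold smoothObj finner frobSq; fun_prop)

lemma gRho_eq_smoothObj (hV : V ∈ l1Ball n) (hmax : IsMaxOn (smoothObj ρ G) (l1Ball n) V) :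
    gRho ρ G = smoothObj ρ G V := by
  refine IsGreatest.csSup_eq ⟨⟨V, hV, rfl⟩, ?_⟩
  rintro x ⟨W, hW, rfl⟩
  exact hmax hW

lemma smoothObj_add_smul_sub (ρ t : ℝ) (G V W : Matrix (Fin n) (Fin n) ℝ) :
    smoothObj ρ G (V + t • (W - V)) = smoothObj ρ G V + t * (smoothObj ρ G W - smoothObj ρ G V)
      + ρ / 2 * (t * (1 - t)) * frobSq (W - V) := by
  obtain ⟨D, rfl⟩ : ∃ D, W = V + D := ⟨W - V, by abel⟩
  simp only [smoothObj, add_sub_cancel_left, finner_add_right, finner_smul_right, frobSq_add,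
    frobSq_smul]
  ring

lemma smoothObj_add_le_of_isMaxOn (hV : V ∈ l1Ball n)
    (hmax : IsMaxOn (smoothObj ρ G) (l1Ball n) V) (hW : W ∈ l1Ball n) :
    smoothObj ρ G W + ρ / 2 * frobSq (W - V) ≤ smoothObj ρ G V := by
  have hle : ∀ t ∈ Set.Ioc (0 : ℝ) 1,
      smoothObj ρ G W + ρ / 2 * (1 - t) * frobSq (W - V) ≤ smoothObj ρ G V := by
    rintro t ⟨ht0, ht1⟩
    have hmem := convex_l1Ball.add_smul_sub_mem hV hW ⟨ht0.le, ht1⟩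
    have := isMaxOn_iff.mp hmax _ hmem
    rw [smoothObj_add_smul_sub] at this
    nlinarith
  have hlim : Filter.Tendsto (fun t : ℝ => smoothObj ρ G W + ρ / 2 * (1 - t) * frobSq (W - V))
      (nhdsWithin 0 (Set.Ioi 0)) (nhds (smoothObj ρ G W + ρ / 2 * frobSq (W - V))) :=
    Continuous.tendsto' (by fun_prop) _ _ (by simp) |>.mono_left nhdsWithin_le_nhds
  exact le_of_tendsto hlim (Filter.mem_of_superset (Ioc_mem_nhdsGT one_pos) hle)

lemma eq_of_isMaxOn_smoothObj (hρ : 0 < ρ) (hV : V ∈ l1Ball n)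
    (hmaxV : IsMaxOn (smoothObj ρ G) (l1Ball n) V) (hW : W ∈ l1Ball n)
    (hmaxW : IsMaxOn (smoothObj ρ G) (l1Ball n) W) : W = V := by
  have h := smoothObj_add_le_of_isMaxOn hV hmaxV hW
  have h' := isMaxOn_iff.mp hmaxW V hV
  have : frobSq (W - V) = 0 :=
    le_antisymm (by nlinarith [frobSq_nonneg (W - V)]) (frobSq_nonneg _)
  exact sub_eq_zero.mp (frobSq_eq_zero_iff.mp this)

end SmoothedObjective

noncomputable def finnerCLM (A : Matrix (Fin m) (Fin n) ℝ) : Matrix (Fin m) (Fin n) ℝ →L[ℝ] ℝ :=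
  LinearMap.toContinuousLinearMap
    { toFun := finner A
      map_add' := finner_add_right A
      map_smul' := fun t B => finner_smul_right t A B }

noncomputable def gramDeriv (M : Matrix (Fin m) (Fin n) ℝ) :
    Matrix (Fin m) (Fin n) ℝ →L[ℝ] Matrix (Fin n) (Fin n) ℝ :=
  LinearMap.toContinuousLinearMap
    { toFun := fun H => Hᵀ * M + Mᵀ * H
      map_add' := fun H K => by
        simp only [transpose_add, Matrix.add_mul, Matrix.mul_add]; abel
      map_smul' := fun t H => by
        simp only [transpose_smul, Matrix.smul_mul, Matrix.mul_smul, smul_add, RingHom.id_apply] }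

lemma gramDeriv_apply (M H : Matrix (Fin m) (Fin n) ℝ) : gramDeriv M H = Hᵀ * M + Mᵀ * H := rfl

lemma hasFDerivAt_transpose_mul_self_sub_one (M : Matrix (Fin m) (Fin n) ℝ) :
    HasFDerivAt (fun X : Matrix (Fin m) (Fin n) ℝ => Xᵀ * X - 1) (gramDeriv M) M := by
  let B := (mulLinearMap ℝ (l := Fin n) (m := Fin m) (n := Fin n) (A := ℝ)).toContinuousBilinearMap
  let T := (transposeLinearEquiv (Fin m) (Fin n) ℝ ℝ).toLinearMap.toContinuousLinearMap
  have h := (B.hasFDerivAt_of_bilinear T.hasFDerivAt (hasFDerivAt_id M)).sub_const 1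
  refine h.congr_fderiv (ContinuousLinearMap.ext fun H => ?_)
  change Mᵀ * H + Hᵀ * M = gramDeriv M H
  rw [gramDeriv_apply, add_comm]

lemma finner_gramDeriv (V : Matrix (Fin n) (Fin n) ℝ) (M H : Matrix (Fin m) (Fin n) ℝ) :
    finner V (gramDeriv M H) = finner (M * (V + Vᵀ)) H := by
  rw [gramDeriv_apply, finner_eq_trace, finner_eq_trace, transpose_mul, transpose_add,
    transpose_transpose, Matrix.mul_add, Matrix.add_mul, Matrix.add_mul, trace_add, trace_add,
    add_comm]
  congr 1
  · rw [Matrix.mul_assoc]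
  · rw [← trace_transpose]
    simp only [transpose_mul, transpose_transpose]
    rw [trace_mul_comm, Matrix.mul_assoc]

section Gradient

variable {ρ : ℝ} {G V : Matrix (Fin n) (Fin n) ℝ}

lemma smoothObj_add_left (ρ : ℝ) (G D W : Matrix (Fin n) (Fin n) ℝ) :
    smoothObj ρ (G + D) W = smoothObj ρ G W + finner W D := by
  rw [smoothObj, smoothObj, finner_comm, finner_add_right, finner_comm W, finner_comm W]
  ring

lemma abs_gRho_add_sub_sub_finner_le (hρ : 0 < ρ) (hV : V ∈ l1Ball n)
    (hmax : IsMaxOn (smoothObj ρ G) (l1Ball n) V) (D : Matrix (Fin n) (Fin n) ℝ) :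
    |gRho ρ (G + D) - gRho ρ G - finner V D| ≤ frobSq D / ρ := by
  obtain ⟨V', hV', hmax'⟩ := exists_isMaxOn_smoothObj ρ (G + D)
  rw [gRho_eq_smoothObj hV' hmax', gRho_eq_smoothObj hV hmax, smoothObj_add_left]
  have hlow := isMaxOn_iff.mp hmax' V hV
  have hup := isMaxOn_iff.mp hmax V' hV'
  have hV'V := smoothObj_add_le_of_isMaxOn hV hmax hV'
  have hVV' := smoothObj_add_le_of_isMaxOn hV' hmax' hV
  rw [smoothObj_add_left, smoothObj_add_left] at hlow hVV'
  rw [← neg_sub, frobSq_neg] at hVV'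
  have hgap : ρ * frobSq (V' - V) ≤ finner V' D - finner V D := by linarith
  have hamgm := two_mul_finner_le D (ρ • (V' - V))
  rw [finner_smul_right, frobSq_smul, finner_comm, finner_sub_left] at hamgm
  have hD : ρ * (finner V' D - finner V D) ≤ frobSq D := by nlinarith
  rw [abs_le]
  constructor
  · linarith [div_nonneg (frobSq_nonneg D) hρ.le]
  · rw [le_div_iff₀ hρ]; nlinarith

lemma hasFDerivAt_gRho (hρ : 0 < ρ) (hV : V ∈ l1Ball n)
    (hmax : IsMaxOn (smoothObj ρ G) (l1Ball n) V) :
    HasFDerivAt (gRho ρ) (finnerCLM V) G := by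
  refine hasFDerivAt_iff_isLittleO_nhds_zero.mpr ?_
  refine Asymptotics.IsBigO.trans_isLittleO ?_ (Asymptotics.isLittleO_norm_pow_id one_lt_two)
  refine Asymptotics.IsBigO.of_bound (n * n / ρ) (Filter.Eventually.of_forall fun D => ?_)
  change |gRho ρ (G + D) - gRho ρ G - finner V D| ≤ n * n / ρ * ‖‖D‖ ^ 2‖
  rw [norm_pow, norm_norm, div_mul_eq_mul_div]
  exact (abs_gRho_add_sub_sub_finner_le hρ hV hmax D).trans
    (div_le_div_of_nonneg_right (frobSq_le_mul_norm_sq D) hρ.le)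

end Gradient

/-- gradient of the smoothed coherence objective: with
`f_ρ(M) = g_ρ(MᵀM − I)`, the function `f_ρ` is differentiable at every `M` with gradient
`∇f_ρ(M) = M(V* + V*ᵀ)` (with respect to the Frobenius inner product, i.e. the derivative
in direction `H` is `⟨M(V* + V*ᵀ), H⟩`), where `V*` is the unique maximizer of
`⟨MᵀM − I, V⟩ − (ρ/2)‖V‖_F²` over the entrywise ℓ₁-ball. -/
theorem stmt_19 {m n : ℕ} (ρ : ℝ) (hρ : 0 < ρ) (M : Matrix (Fin m) (Fin n) ℝ) :
    ∃ V : Matrix (Fin n) (Fin n) ℝ,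
      (l1Norm V ≤ 1 ∧
        ∀ W : Matrix (Fin n) (Fin n) ℝ, l1Norm W ≤ 1 →
          finner (Mᵀ * M - 1) W - ρ / 2 * frobSq W ≤
            finner (Mᵀ * M - 1) V - ρ / 2 * frobSq V) ∧
      (∀ W : Matrix (Fin n) (Fin n) ℝ, l1Norm W ≤ 1 →
        (∀ U : Matrix (Fin n) (Fin n) ℝ, l1Norm U ≤ 1 →
          finner (Mᵀ * M - 1) U - ρ / 2 * frobSq U ≤
            finner (Mᵀ * M - 1) W - ρ / 2 * frobSq W) → W = V) ∧
      DifferentiableAt ℝ (fun X : Matrix (Fin m) (Fin n) ℝ => gRho ρ (Xᵀ * X - 1)) M ∧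
      ∀ H : Matrix (Fin m) (Fin n) ℝ,
        fderiv ℝ (fun X : Matrix (Fin m) (Fin n) ℝ => gRho ρ (Xᵀ * X - 1)) M H =
          finner (M * (V + Vᵀ)) H := by
  obtain ⟨V, hV, hmax⟩ := exists_isMaxOn_smoothObj ρ (Mᵀ * M - 1)
  have hderiv : HasFDerivAt (fun X : Matrix (Fin m) (Fin n) ℝ => gRho ρ (Xᵀ * X - 1))
      ((finnerCLM V).comp (gramDeriv M)) M :=
    (hasFDerivAt_gRho hρ hV hmax).comp (g := gRho ρ) M (hasFDerivAt_transpose_mul_self_sub_one M)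
  refine ⟨V, ⟨hV, isMaxOn_iff.mp hmax⟩,
    fun W hW hmaxW => eq_of_isMaxOn_smoothObj hρ hV hmax hW (isMaxOn_iff.mpr hmaxW),
    hderiv.differentiableAt, fun H => ?_⟩
  rw [hderiv.fderiv]
  exact finner_gramDeriv V M H
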